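/- Let G be a connected simple graph containing no subgraph isomorphic to T1, T2, or any cycle of length ≥ 4, and suppose F ⊆ E(G) contains exactly one edge from each triangle of G and nothing else. Then G − F (deleting the edges F) is a caterpillar. -/

import Mathlib

/-- The spider `T1 = S(2,2,2)`. -/
def spiderT1 : SimpleGraph (Fin 7) :=
  SimpleGraph.fromEdgeSet {s(0, 1), s(0, 2), s(0, 3), s(1, 4), s(2, 5), s(3, 6)}

/-- The net graph `T2`: a triangle with a pendant leaf at each vertex. -/
def netT2 : SimpleGraph (Fin 6) :=
  SimpleGraph.fromEdgeSet {s(0, 1), s(1, 2), s(0, 2), s(0, 3), s(1, 4), s(2, 5)}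

/-- `G` contains a subgraph isomorphic to `H`. -/
def ContainsSub {α β : Type*} (H : SimpleGraph α) (G : SimpleGraph β) : Prop :=
  ∃ f : α → β, Function.Injective f ∧ ∀ u v, H.Adj u v → G.Adj (f u) (f v)

/-- `G` is a caterpillar: a tree such that deleting the degree-1 vertices (those with
exactly one neighbor) leaves a path (possibly empty). -/
def IsCaterpillar {V : Type*} (G : SimpleGraph V) : Prop :=
  G.IsTree ∧ ∃ n : ℕ,
    Nonempty ((G.induce {v : V | ¬ ∃! w : V, G.Adj v w}) ≃g SimpleGraph.pathGraph n)

/-!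
Every edge of `F` lies in a triangle whose other two edges survive, so `G − F` is still
connected; it has no triangle (each lost an edge) and no longer cycle (those are cycles of `G`),
so it is a tree. In a tree, three non-leaf neighbours of a vertex, each extended by one more
edge, form a spider `T1` (acyclicity keeps the seven vertices distinct). Hence the non-leaves
induce a connected acyclic graph of maximum degree two, i.e. a path.
-/

open SimpleGraph

lemma containsSub_iff_isContained {α β : Type*} {H : SimpleGraph α} {G : SimpleGraph β} :
    ContainsSub H G ↔ H ⊑ G :=
  ⟨fun ⟨f, hf, hadj⟩ => ⟨⟨⟨f, hadj _ _⟩, hf⟩⟩,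
    fun ⟨c⟩ => ⟨c, c.injective, fun _ _ h => c.toHom.map_adj h⟩⟩

lemma spiderT1_isContained_of_nodup {V : Type*} {G : SimpleGraph V} {c a₁ a₂ a₃ b₁ b₂ b₃ : V}
    (hnd : [c, a₁, a₂, a₃, b₁, b₂, b₃].Nodup) (h₁ : G.Adj c a₁) (h₂ : G.Adj c a₂)
    (h₃ : G.Adj c a₃) (h₁' : G.Adj a₁ b₁) (h₂' : G.Adj a₂ b₂) (h₃' : G.Adj a₃ b₃) :
    spiderT1 ⊑ G := by
  refine ⟨⟨⟨fun i => [c, a₁, a₂, a₃, b₁, b₂, b₃].get i, fun {i j} hij => ?_⟩,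
    List.nodup_iff_injective_get.1 hnd⟩⟩
  obtain ⟨hij, -⟩ := (fromEdgeSet_adj _).1 hij
  simp only [Set.mem_insert_iff, Set.mem_singleton_iff, Sym2.eq_iff] at hij
  rcases hij with h | h | h | h | h | h <;> rcases h with ⟨rfl, rfl⟩ | ⟨rfl, rfl⟩ <;>
    simp [h₁, h₂, h₃, h₁', h₂', h₃', h₁.symm, h₂.symm, h₃.symm, h₁'.symm, h₂'.symm, h₃'.symm]

namespace SimpleGraph

variable {V : Type*} {G : SimpleGraph V}

lemma Preconnected.of_forall_adj_reachable {H : SimpleGraph V} (hG : G.Preconnected)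
    (h : ∀ ⦃u v⦄, G.Adj u v → H.Reachable u v) : H.Preconnected := fun u v => by
  have huv := hG u v
  simp only [reachable_eq_reflTransGen] at h huv ⊢
  exact Relation.reflTransGen_closed (fun _ _ => @h _ _) _ _ huv

lemma Connected.exists_adj_dist_eq (hG : G.Connected) {u v : V} {d : ℕ}
    (h : G.dist u v = d + 1) : ∃ w, G.Adj w v ∧ G.dist u w = d := by
  obtain ⟨p, hp⟩ := hG.exists_walk_length_eq_dist u v
  have hnil : ¬p.Nil := by rw [← Walk.length_eq_zero_iff]; omega
  refine ⟨p.penultimate, p.adj_penultimate hnil, le_antisymm ?_ ?_⟩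
  · calc G.dist u p.penultimate ≤ p.dropLast.length := dist_le _
      _ = d := by rw [Walk.length_dropLast]; omega
  · have := (p.adj_penultimate hnil).reachable.dist_triangle_right u
    rw [dist_eq_one_iff_adj.2 (p.adj_penultimate hnil)] at this
    omega

section Finite

variable [Fintype V] [DecidableRel G.Adj]

lemma Connected.injective_dist_of_degree_le_two (hG : G.Connected)
    (hdeg : ∀ v, G.degree v ≤ 2) {v₀ : V} (hv₀ : G.degree v₀ ≤ 1) :
    Function.Injective (G.dist v₀) := by
  -- Two vertices at distance `d + 1` would share their neighbour at distance `d`, which would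
  -- then have degree at least three (at least two if it is `v₀`).
  suffices ∀ d u w, G.dist v₀ u = d → G.dist v₀ w = d → u = w from
    fun u w huw => this _ u w rfl huw.symm
  intro d
  induction d with
  | zero =>
    intro u w hu hw
    rw [hG.dist_eq_zero_iff] at hu hw
    rw [← hu, ← hw]
  | succ d ih =>
    intro u w hu hw
    by_contra hne
    obtain ⟨x, hxu, hx⟩ := hG.exists_adj_dist_eq hu
    obtain ⟨x', hxw, hx'⟩ := hG.exists_adj_dist_eq hw
    obtain rfl : x = x' := ih x x' hx hx'
    cases d with
    | zero =>
      rw [hG.dist_eq_zero_iff] at hx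
      subst hx
      have : 1 < G.degree v₀ := Finset.one_lt_card_iff.2
        ⟨u, w, by simpa using hxu, by simpa using hxw, hne⟩
      omega
    | succ d =>
      obtain ⟨y, hyx, hy⟩ := hG.exists_adj_dist_eq hx
      have : 2 < G.degree x := Finset.two_lt_card_iff.2
        ⟨u, w, y, by simpa using hxu, by simpa using hxw, by simpa using hyx.symm, hne,
          by rintro rfl; omega, by rintro rfl; omega⟩
      linarith [hdeg x]

lemma Connected.nonempty_iso_pathGraph (hG : G.Connected) (hdeg : ∀ v, G.degree v ≤ 2)
    {v₀ : V} (hv₀ : G.degree v₀ ≤ 1) : Nonempty (G ≃g pathGraph (Fintype.card V)) := by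
  have hinj := hG.injective_dist_of_degree_le_two hdeg hv₀
  have hlt (u : V) : G.dist v₀ u < Fintype.card V := by
    obtain ⟨p, hp, hlen⟩ := hG.exists_path_of_dist v₀ u
    exact hlen ▸ hp.length_lt
  let f : V → Fin (Fintype.card V) := fun u => ⟨G.dist v₀ u, hlt u⟩
  have hf : Function.Bijective f := (Fintype.bijective_iff_injective_and_card f).2
    ⟨fun u w h => hinj (Fin.val_eq_of_eq h), by simp⟩
  have hsucc {u w : V} (h : G.dist v₀ w = G.dist v₀ u + 1) : G.Adj u w := by
    obtain ⟨u', hu'w, hu'⟩ := hG.exists_adj_dist_eq h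
    rwa [hinj hu'] at hu'w
  refine ⟨⟨Equiv.ofBijective f hf, fun {u w} => ?_⟩⟩
  simp only [Equiv.ofBijective_apply, pathGraph_adj, f]
  refine ⟨?_, fun h => ?_⟩
  · rintro (h | h)
    exacts [hsucc h.symm, (hsucc h.symm).symm]
  · have hne : G.dist v₀ u ≠ G.dist v₀ w := fun h' => h.ne (hinj h')
    rcases h.diff_dist_adj (u := v₀) with h' | h' | h' <;> omega

lemma IsTree.exists_degree_le_one (hG : G.IsTree) : ∃ v, G.degree v ≤ 1 := by
  cases subsingleton_or_nontrivial V with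
  | inl _ =>
    obtain ⟨v⟩ := hG.connected.nonempty
    exact ⟨v, by simp [degree]⟩
  | inr _ =>
    obtain ⟨v, hv⟩ := hG.exists_vert_degree_one_of_nontrivial
    exact ⟨v, hv.le⟩

lemma IsAcyclic.nonempty_iso_pathGraph (hG : G.IsAcyclic) (hpre : G.Preconnected)
    (hdeg : ∀ v, G.degree v ≤ 2) : Nonempty (G ≃g pathGraph (Fintype.card V)) := by
  cases isEmpty_or_nonempty V with
  | inl _ =>
    exact ⟨⟨Fintype.equivFin V, fun {u} => isEmptyElim u⟩⟩
  | inr _ =>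
    have hT : G.IsTree := ⟨⟨hpre⟩, hG⟩
    obtain ⟨v₀, hv₀⟩ := hT.exists_degree_le_one
    exact hT.connected.nonempty_iso_pathGraph hdeg hv₀

end Finite

def nonLeaves (G : SimpleGraph V) : Set V := {v | ¬ ∃! w, G.Adj v w}

lemma neighborSet_subsingleton_of_notMem_nonLeaves {v : V} (hv : v ∉ G.nonLeaves) :
    (G.neighborSet v).Subsingleton := by
  obtain ⟨w, -, hw⟩ := not_not.1 hv
  exact fun a ha b hb => (hw a ha).trans (hw b hb).symm

lemma exists_adj_ne_of_mem_nonLeaves {v u : V} (hv : v ∈ G.nonLeaves) (hvu : G.Adj v u) :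
    ∃ w, G.Adj v w ∧ w ≠ u := by
  by_contra! h
  exact hv ⟨u, hvu, h⟩

lemma IsAcyclic.eq_of_adj_of_adj (hG : G.IsAcyclic) {a b b' c : V} (hab : G.Adj a b)
    (hbc : G.Adj b c) (hab' : G.Adj a b') (hb'c : G.Adj b' c) (hac : a ≠ c) : b = b' := by
  have hpath {x : V} (hax : G.Adj a x) (hxc : G.Adj x c) :
      (Walk.cons hax (Walk.cons hxc Walk.nil)).IsPath := by
    simp [Walk.cons_isPath_iff, hax.ne, hxc.ne, hac]
  have := congrArg (fun p : G.Path a c => p.1.support)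
    ((hG.subsingleton_path a c).elim ⟨_, hpath hab hbc⟩ ⟨_, hpath hab' hb'c⟩)
  simpa using this

lemma IsAcyclic.spiderT1_isContained (hG : G.IsAcyclic) {v q₁ q₂ q₃ : V} (h₁ : G.Adj v q₁)
    (h₂ : G.Adj v q₂) (h₃ : G.Adj v q₃) (h₁₂ : q₁ ≠ q₂) (h₁₃ : q₁ ≠ q₃) (h₂₃ : q₂ ≠ q₃)
    (hq₁ : q₁ ∈ G.nonLeaves) (hq₂ : q₂ ∈ G.nonLeaves) (hq₃ : q₃ ∈ G.nonLeaves) :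
    spiderT1 ⊑ G := by
  obtain ⟨r₁, h₁', hr₁⟩ := exists_adj_ne_of_mem_nonLeaves hq₁ h₁.symm
  obtain ⟨r₂, h₂', hr₂⟩ := exists_adj_ne_of_mem_nonLeaves hq₂ h₂.symm
  obtain ⟨r₃, h₃', hr₃⟩ := exists_adj_ne_of_mem_nonLeaves hq₃ h₃.symm
  have hqr {q q' r : V} (hq : G.Adj v q) (hq' : G.Adj v q') (hqr : G.Adj q r) (hne : q ≠ q') :
      r ≠ q' := by
    rintro rfl
    classical
    exact hG.cliqueFree le_rfl _ (is3Clique_triple_iff.2 ⟨hq, hq', hqr⟩)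
  have hrr {q q' r r' : V} (hq : G.Adj v q) (hq' : G.Adj v q') (hqr : G.Adj q r)
      (hq'r' : G.Adj q' r') (hrv : r ≠ v) (hne : q ≠ q') : r ≠ r' := by
    rintro rfl
    exact hne (hG.eq_of_adj_of_adj hq hqr hq' hq'r' hrv.symm)
  refine spiderT1_isContained_of_nodup ?_ h₁ h₂ h₃ h₁' h₂' h₃'
  simp only [List.nodup_cons, List.mem_cons, List.not_mem_nil, List.nodup_nil, or_false,
    not_or, not_false_eq_true, and_true]
  refine ⟨⟨h₁.ne, h₂.ne, h₃.ne, hr₁.symm, hr₂.symm, hr₃.symm⟩,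
    ⟨h₁₂, h₁₃, h₁'.ne, (hqr h₂ h₁ h₂' h₁₂.symm).symm, (hqr h₃ h₁ h₃' h₁₃.symm).symm⟩,
    ⟨h₂₃, (hqr h₁ h₂ h₁' h₁₂).symm, h₂'.ne, (hqr h₃ h₂ h₃' h₂₃.symm).symm⟩,
    ⟨(hqr h₁ h₃ h₁' h₁₃).symm, (hqr h₂ h₃ h₂' h₂₃).symm, h₃'.ne⟩,
    ⟨hrr h₁ h₂ h₁' h₂' hr₁ h₁₂, hrr h₁ h₃ h₁' h₃' hr₁ h₁₃⟩, hrr h₂ h₃ h₂' h₃' hr₂ h₂₃⟩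

lemma IsAcyclic.degree_induce_nonLeaves_le_two [Fintype V] [DecidableRel G.Adj]
    [DecidablePred (· ∈ G.nonLeaves)] (hG : G.IsAcyclic) (hT1 : ¬spiderT1 ⊑ G)
    (v : G.nonLeaves) : (G.induce G.nonLeaves).degree v ≤ 2 := by
  by_contra! hdeg
  obtain ⟨q₁, q₂, q₃, h₁, h₂, h₃, h₁₂, h₁₃, h₂₃⟩ := Finset.two_lt_card_iff.1 hdeg
  rw [mem_neighborFinset, comap_adj] at h₁ h₂ h₃
  exact hT1 (hG.spiderT1_isContained h₁ h₂ h₃ (Subtype.coe_injective.ne h₁₂)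
    (Subtype.coe_injective.ne h₁₃) (Subtype.coe_injective.ne h₂₃) q₁.2 q₂.2 q₃.2)

lemma IsTree.isCaterpillar [Finite V] (hG : G.IsTree) (hT1 : ¬spiderT1 ⊑ G) :
    IsCaterpillar G := by
  classical
  have := Fintype.ofFinite V
  have hpre : (G.induce G.nonLeaves).Preconnected :=
    hG.connected.preconnected.induce_of_degree_eq_one
      fun _ hv => neighborSet_subsingleton_of_notMem_nonLeaves hv
  -- Going through `nonLeaves` makes the `Fintype` instance on the subtype the classical one.
  refine ⟨hG, show ∃ n, Nonempty (G.induce G.nonLeaves ≃g pathGraph n) from ?_⟩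
  exact ⟨_, (hG.isAcyclic.induce _).nonempty_iso_pathGraph hpre
    (hG.isAcyclic.degree_induce_nonLeaves_le_two hT1)⟩

variable {F : Set (Sym2 V)}

lemma reachable_deleteEdges_of_adj
    (hFtri : ∀ e ∈ F, ∃ u v w : V, e = s(u, v) ∧ G.Adj u v ∧ G.Adj v w ∧ G.Adj u w)
    (htriF : ∀ u v w : V, G.Adj u v → G.Adj v w → G.Adj u w →
      ∃! e : Sym2 V, e ∈ ({s(u, v), s(v, w), s(u, w)} : Set (Sym2 V)) ∧ e ∈ F)
    {a b : V} (hab : G.Adj a b) : (G.deleteEdges F).Reachable a b := by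
  by_cases habF : s(a, b) ∈ F
  · obtain ⟨u, v, w, he, huv, hvw, huw⟩ := hFtri _ habF
    obtain ⟨e, -, he_unique⟩ := htriF u v w huv hvw huw
    have huvF : s(u, v) = e := he_unique _ ⟨by simp, he ▸ habF⟩
    have hvwF : s(v, w) ∉ F := fun h => by
      simpa [huv.ne, huw.ne] using huvF.trans (he_unique _ ⟨by simp, h⟩).symm
    have huwF : s(u, w) ∉ F := fun h => by
      simpa [huw.ne, hvw.ne] using huvF.trans (he_unique _ ⟨by simp, h⟩).symm
    have huv' : (G.deleteEdges F).Reachable u v :=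
      (deleteEdges_adj.2 ⟨huw, huwF⟩).reachable.trans
        (deleteEdges_adj.2 ⟨hvw.symm, by rwa [Sym2.eq_swap]⟩).reachable
    rcases Sym2.eq_iff.1 he with ⟨rfl, rfl⟩ | ⟨rfl, rfl⟩
    exacts [huv', huv'.symm]
  · exact (deleteEdges_adj.2 ⟨hab, habF⟩).reachable

lemma Connected.deleteEdges_of_triangles (hG : G.Connected)
    (hFtri : ∀ e ∈ F, ∃ u v w : V, e = s(u, v) ∧ G.Adj u v ∧ G.Adj v w ∧ G.Adj u w)
    (htriF : ∀ u v w : V, G.Adj u v → G.Adj v w → G.Adj u w →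
      ∃! e : Sym2 V, e ∈ ({s(u, v), s(v, w), s(u, w)} : Set (Sym2 V)) ∧ e ∈ F) :
    (G.deleteEdges F).Connected :=
  (connected_iff _).2 ⟨Preconnected.of_forall_adj_reachable hG.preconnected
    fun _ _ => reachable_deleteEdges_of_adj hFtri htriF, hG.nonempty⟩

lemma cliqueFree_three_deleteEdges
    (htriF : ∀ u v w : V, G.Adj u v → G.Adj v w → G.Adj u w →
      ∃ e : Sym2 V, e ∈ ({s(u, v), s(v, w), s(u, w)} : Set (Sym2 V)) ∧ e ∈ F) :
    (G.deleteEdges F).CliqueFree 3 := by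
  classical
  intro s hs
  obtain ⟨a, b, c, hab, hac, hbc, -⟩ := is3Clique_iff.1 hs
  rw [deleteEdges_adj] at hab hac hbc
  obtain ⟨e, he, heF⟩ := htriF a b c hab.1 hbc.1 hac.1
  rcases he with rfl | rfl | rfl
  exacts [hab.2 heF, hbc.2 heF, hac.2 heF]

lemma isAcyclic_of_cliqueFree_three_of_free_cycleGraph (h3 : G.CliqueFree 3)
    (hcyc : ∀ n ≥ 4, (cycleGraph n).Free G) : G.IsAcyclic := by
  rw [isAcyclic_iff_free_cycleGraph]
  intro n hn
  rcases hn.eq_or_lt with rfl | hn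
  · rw [cycleGraph_three_eq_top]
    exact cliqueFree_iff_top_free.1 (by simpa using h3)
  · exact hcyc n hn

end SimpleGraph

theorem deleteTriangleEdges_caterpillar_general {V : Type*} [Fintype V]
    (G : SimpleGraph V) (hconn : G.Connected)
    (hT1 : ¬ ContainsSub spiderT1 G)
    (hcyc : ∀ k : ℕ, 4 ≤ k → ¬ ContainsSub (SimpleGraph.cycleGraph k) G)
    (F : Set (Sym2 V))
    (hFtri : ∀ e ∈ F, ∃ u v w : V, e = s(u, v) ∧ G.Adj u v ∧ G.Adj v w ∧ G.Adj u w)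
    (htriF : ∀ u v w : V, G.Adj u v → G.Adj v w → G.Adj u w →
      ∃! e : Sym2 V, e ∈ ({s(u, v), s(v, w), s(u, w)} : Set (Sym2 V)) ∧ e ∈ F) :
    IsCaterpillar (G.deleteEdges F) := by
  simp only [containsSub_iff_isContained] at hT1 hcyc
  have hacyc : (G.deleteEdges F).IsAcyclic :=
    isAcyclic_of_cliqueFree_three_of_free_cycleGraph
      (cliqueFree_three_deleteEdges fun u v w huv hvw huw => (htriF u v w huv hvw huw).exists)
      fun n hn h => hcyc n hn (h.mono_right (deleteEdges_le F))
  exact IsTree.isCaterpillar ⟨hconn.deleteEdges_of_triangles hFtri htriF, hacyc⟩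
    fun h => hT1 (h.mono_right (deleteEdges_le F))

/-- if the connected graph `G` contains no `T1`, `T2` or cycle of length
`≥ 4`, and `F` consists of exactly one edge of each triangle of `G` and nothing else,
then `G − F` is a caterpillar. -/
theorem deleteTriangleEdges_caterpillar {V : Type*} [Fintype V] [DecidableEq V]
    (G : SimpleGraph V) [DecidableRel G.Adj] (hconn : G.Connected)
    (hT1 : ¬ ContainsSub spiderT1 G) (hT2 : ¬ ContainsSub netT2 G)
    (hcyc : ∀ k : ℕ, 4 ≤ k → ¬ ContainsSub (SimpleGraph.cycleGraph k) G)
    (F : Set (Sym2 V)) (hFE : F ⊆ G.edgeSet)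
    (hFtri : ∀ e ∈ F, ∃ u v w : V, e = s(u, v) ∧ G.Adj u v ∧ G.Adj v w ∧ G.Adj u w)
    (htriF : ∀ u v w : V, G.Adj u v → G.Adj v w → G.Adj u w →
      ∃! e : Sym2 V, e ∈ ({s(u, v), s(v, w), s(u, w)} : Set (Sym2 V)) ∧ e ∈ F) :
    IsCaterpillar (G.deleteEdges F) :=
  deleteTriangleEdges_caterpillar_general G hconn hT1 hcyc F hFtri htriF
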